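/- arXiv:2407.21541 — 5 statements merged into one kernel-verified Lean document; each statement's English description precedes it below -/
import Mathlib

section
/- Let p ≥ 1 and let σ : ℝ^{m×d} → ℝ be separately convex, i.e. for every matrix A and every index pair (i,j) the function t ↦ σ(A + t E_{ij}) is convex on ℝ, where E_{ij} is the standard basis matrix. Assume |σ(ξ)| ≤ c₂(1 + ‖ξ‖^p) for all ξ. Then there exists a constant C > 0, depending only on c₂, p, m, d, such that |σ(A) − σ(B)| ≤ C (1 + ‖A‖^{p−1} + ‖B‖^{p−1}) ‖A − B‖ for all matrices A, B. -/
/-!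
Put `r = 1 + ‖A‖ + ‖B‖`. Walk from `B` to `A` changing one entry at a time; every matrix on
the way has its entries taken from `A` or `B`, so its norm is at most `‖A‖ + ‖B‖`. Along the
coordinate line through such a matrix, `σ` is convex and, by the growth bound, bounded by
`M = c₂ (1 + (3r)^p)` for parameters in `(-2r, 2r)`; a convex function bounded by `M` there is
`2M/r`-Lipschitz on `(-r, r)`, which contains the step `A i j - B i j`. Summing the `m d` steps
and using `(1 + (3r)^p) / r ≤ (1 + 3^p) r^(p-1) ≤ (1 + 3^p) 3^(p-1) (1 + ‖A‖^(p-1) + ‖B‖^(p-1))`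
gives the estimate.
-/

attribute [local instance] Matrix.frobeniusNormedAddCommGroup Matrix.frobeniusNormedSpace

namespace Matrix

section Frobenius

variable {m n α : Type*} [Fintype m] [Fintype n] [NormedAddCommGroup α]

theorem frobenius_norm_sq_eq (A : Matrix m n α) : ‖A‖ ^ 2 = ∑ i, ∑ j, ‖A i j‖ ^ 2 := by
  rw [frobenius_norm_def, ← Real.sqrt_eq_rpow, Real.sq_sqrt (by positivity)]
  simp only [Real.rpow_two]

theorem norm_entry_le_frobenius_norm (A : Matrix m n α) (i : m) (j : n) : ‖A i j‖ ≤ ‖A‖ :=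
  (PiLp.norm_apply_le (WithLp.toLp 2 (A i)) j).trans
    (PiLp.norm_apply_le (WithLp.toLp 2 fun i => WithLp.toLp 2 (A i)) i)

theorem frobenius_norm_single [DecidableEq m] [DecidableEq n] (i : m) (j : n) (a : α) :
    ‖single i j a‖ = ‖a‖ := by
  rw [← sq_eq_sq₀ (norm_nonneg _) (norm_nonneg _), frobenius_norm_sq_eq,
    Finset.sum_eq_single i, Finset.sum_eq_single j]
  · simp
  · intro j' _ hj'; simp [single_apply_of_ne, Ne.symm hj']
  · simp
  · intro i' _ hi'; simp [single_apply_of_ne, Ne.symm hi']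
  · simp

theorem frobenius_norm_le_add_of_sq_le {A B C : Matrix m n α}
    (h : ∀ i j, ‖C i j‖ ^ 2 ≤ ‖A i j‖ ^ 2 + ‖B i j‖ ^ 2) : ‖C‖ ≤ ‖A‖ + ‖B‖ := by
  have hsq : ‖C‖ ^ 2 ≤ ‖A‖ ^ 2 + ‖B‖ ^ 2 := by
    simp only [frobenius_norm_sq_eq, ← Finset.sum_add_distrib]
    exact Finset.sum_le_sum fun i _ => Finset.sum_le_sum fun j _ => h i j
  nlinarith [norm_nonneg A, norm_nonneg B, norm_nonneg C]

end Frobenius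

section Piecewise

variable {m n α : Type*} [DecidableEq m] [DecidableEq n]

def piecewise (S : Finset (m × n)) (A B : Matrix m n α) : Matrix m n α :=
  of fun i j => if (i, j) ∈ S then A i j else B i j

@[simp]
theorem piecewise_empty (A B : Matrix m n α) : piecewise ∅ A B = B := by
  ext i j; simp [piecewise]

@[simp]
theorem piecewise_univ [Fintype m] [Fintype n] (A B : Matrix m n α) :
    piecewise Finset.univ A B = A := by
  ext i j; simp [piecewise]

theorem piecewise_insert {S : Finset (m × n)} {i : m} {j : n} (hij : (i, j) ∉ S)
    (A B : Matrix m n ℝ) :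
    piecewise (insert (i, j) S) A B = piecewise S A B + (A i j - B i j) • single i j 1 := by
  ext i' j'
  by_cases h : i = i' ∧ j = j'
  · obtain ⟨rfl, rfl⟩ := h
    simp [piecewise, hij]
  · have h' : ¬(i' = i ∧ j' = j) := fun ⟨hi, hj⟩ => h ⟨hi.symm, hj.symm⟩
    simp [piecewise, single_apply_of_ne (h := h), h']

theorem frobenius_norm_piecewise_le [Fintype m] [Fintype n] [NormedAddCommGroup α]
    (S : Finset (m × n)) (A B : Matrix m n α) :
    ‖piecewise S A B‖ ≤ ‖A‖ + ‖B‖ :=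
  frobenius_norm_le_add_of_sq_le fun i j => by
    simp only [piecewise, of_apply]
    split_ifs <;> simp

end Piecewise

end Matrix

theorem Finset.abs_sub_le_card_mul {ι : Type*} [DecidableEq ι] (g : Finset ι → ℝ) {L : ℝ}
    (h : ∀ S x, x ∉ S → |g (insert x S) - g S| ≤ L) (s : Finset ι) :
    |g s - g ∅| ≤ s.card * L := by
  induction s using Finset.induction_on with
  | empty => simp
  | insert x S hx ih =>
    calc |g (insert x S) - g ∅| ≤ |g (insert x S) - g S| + |g S - g ∅| := abs_sub_le _ _ _
      _ ≤ L + S.card * L := add_le_add (h S x hx) ih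
      _ = (insert x S).card * L := by rw [card_insert_of_notMem hx]; push_cast; ring

theorem abs_sub_le_of_convexOn_line {E : Type*} [NormedAddCommGroup E] [NormedSpace ℝ E]
    {f : E → ℝ} {x e : E} {r M t : ℝ} (hf : ConvexOn ℝ Set.univ fun s : ℝ => f (x + s • e))
    (he : ‖e‖ ≤ 1) (hr : 0 < r) (hM : ∀ y, ‖y - x‖ < 2 * r → |f y| ≤ M) (ht : |t| < r) :
    |f (x + t • e) - f x| ≤ 2 * M / r * |t| := by
  have hM' : ∀ s : ℝ, dist s 0 < 2 * r → |f (x + s • e)| ≤ M := fun s hs => hM _ <| by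
    rw [Real.dist_0_eq_abs] at hs
    rw [add_sub_cancel_left, norm_smul]
    exact (mul_le_of_le_one_right (norm_nonneg s) he).trans_lt hs
  have hM0 : 0 ≤ M := (abs_nonneg _).trans (hM x (by simpa using hr))
  have hlip := (hf.subset (Set.subset_univ _) (convex_ball 0 (2 * r))).lipschitzOnWith_of_abs_le
    hr hM'
  have := hlip.dist_le_mul t (by simpa [two_mul] using ht) 0 (by simpa [two_mul] using hr)
  simpa [Real.dist_eq, Real.coe_toNNReal _ (by positivity : 0 ≤ 2 * M / r)] using this

theorem Real.rpow_add_add_le {x y z q : ℝ} (hx : 0 ≤ x) (hy : 0 ≤ y) (hz : 0 ≤ z) (hq : 0 ≤ q) :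
    (x + y + z) ^ q ≤ 3 ^ q * (x ^ q + y ^ q + z ^ q) := by
  have hsum : x + y + z ≤ 3 * max x (max y z) := by
    linarith [le_max_left x (max y z), le_max_right x (max y z), le_max_left y z,
      le_max_right y z]
  have hmax : max x (max y z) ^ q ≤ x ^ q + y ^ q + z ^ q := by
    have := Real.rpow_nonneg hx q
    have := Real.rpow_nonneg hy q
    have := Real.rpow_nonneg hz q
    rcases max_choice x (max y z) with h | h <;> rw [h]
    · linarith
    · rcases max_choice y z with h' | h' <;> rw [h'] <;> linarith
  calc (x + y + z) ^ q ≤ (3 * max x (max y z)) ^ q := by gcongr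
    _ = 3 ^ q * max x (max y z) ^ q := Real.mul_rpow (by norm_num) (by positivity)
    _ ≤ 3 ^ q * (x ^ q + y ^ q + z ^ q) := by gcongr

theorem one_add_rpow_three_mul_div_le {r p : ℝ} (hr : 1 ≤ r) (hp : 1 ≤ p) :
    (1 + (3 * r) ^ p) / r ≤ (1 + 3 ^ p) * r ^ (p - 1) := by
  have hr0 : 0 < r := by linarith
  have hsplit : (3 * r) ^ p = 3 ^ p * r ^ (p - 1) * r := by
    rw [Real.mul_rpow (by norm_num) hr0.le, mul_assoc, ← Real.rpow_add_one hr0.ne']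
    ring_nf
  have hone : 1 ≤ r ^ (p - 1) := Real.one_le_rpow hr (by linarith)
  rw [div_le_iff₀ hr0, hsplit]
  nlinarith [Real.rpow_pos_of_pos (by norm_num : (0 : ℝ) < 3) p]

open Matrix in
theorem abs_sub_le_of_separatelyConvex {m n : Type*} [Fintype m] [Fintype n] [DecidableEq m]
    [DecidableEq n] {σ : Matrix m n ℝ → ℝ} {c p : ℝ} (hc : 0 ≤ c) (hp : 0 ≤ p)
    (hconv : ∀ (A : Matrix m n ℝ) (i : m) (j : n),
      ConvexOn ℝ Set.univ fun t : ℝ => σ (A + t • single i j 1))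
    (hbound : ∀ ξ, |σ ξ| ≤ c * (1 + ‖ξ‖ ^ p)) (A B : Matrix m n ℝ) :
    |σ A - σ B| ≤ Fintype.card m * Fintype.card n *
      (2 * (c * (1 + (3 * (1 + ‖A‖ + ‖B‖)) ^ p)) / (1 + ‖A‖ + ‖B‖) * ‖A - B‖) := by
  set r := 1 + ‖A‖ + ‖B‖
  have hr : 0 < r := by positivity
  have hstep : ∀ S (x : m × n), x ∉ S →
      |σ (piecewise (insert x S) A B) - σ (piecewise S A B)| ≤
        2 * (c * (1 + (3 * r) ^ p)) / r * ‖A - B‖ := by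
    rintro S ⟨i, j⟩ hx
    rw [piecewise_insert hx]
    have hv : |A i j - B i j| ≤ ‖A - B‖ := norm_entry_le_frobenius_norm (A - B) i j
    have hM : ∀ y, ‖y - piecewise S A B‖ < 2 * r → |σ y| ≤ c * (1 + (3 * r) ^ p) := by
      intro y hy
      have hy3 : ‖y‖ ≤ 3 * r := calc
        ‖y‖ ≤ ‖piecewise S A B‖ + ‖y - piecewise S A B‖ := norm_le_norm_add_norm_sub' _ _
        _ ≤ ‖A‖ + ‖B‖ + 2 * r := add_le_add (frobenius_norm_piecewise_le S A B) hy.le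
        _ ≤ 3 * r := by linarith
      exact (hbound y).trans (by gcongr)
    calc _ ≤ 2 * (c * (1 + (3 * r) ^ p)) / r * |A i j - B i j| :=
          abs_sub_le_of_convexOn_line (hconv _ i j) (by simp [frobenius_norm_single]) hr hM
            (hv.trans_lt (by linarith [norm_sub_le A B]))
      _ ≤ 2 * (c * (1 + (3 * r) ^ p)) / r * ‖A - B‖ := by gcongr
  simpa using Finset.abs_sub_le_card_mul (fun S => σ (piecewise S A B)) hstep Finset.univ

/-- A separately convex function `σ` on `m × d` matrices (Frobenius norm) with
`|σ(ξ)| ≤ c₂(1 + ‖ξ‖^p)` satisfies the local Lipschitz estimate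
`|σ(A) − σ(B)| ≤ C (1 + ‖A‖^{p−1} + ‖B‖^{p−1}) ‖A − B‖` for some constant `C > 0`. -/
theorem stmt_7 (d m : ℕ) (hd : 1 ≤ d) (hm : 1 ≤ m) (p : ℝ) (hp : 1 ≤ p)
    (σ : Matrix (Fin m) (Fin d) ℝ → ℝ) (c₂ : ℝ) (hc₂ : 0 < c₂)
    (hsepconv : ∀ (A : Matrix (Fin m) (Fin d) ℝ) (i : Fin m) (j : Fin d),
      ConvexOn ℝ Set.univ (fun t : ℝ => σ (A + t • Matrix.single i j (1 : ℝ))))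
    (hbound : ∀ ξ : Matrix (Fin m) (Fin d) ℝ, |σ ξ| ≤ c₂ * (1 + ‖ξ‖ ^ p)) :
    ∃ C : ℝ, 0 < C ∧ ∀ A B : Matrix (Fin m) (Fin d) ℝ,
      |σ A - σ B| ≤ C * (1 + ‖A‖ ^ (p - 1) + ‖B‖ ^ (p - 1)) * ‖A - B‖ := by
  have hm0 : (0 : ℝ) < m := by exact_mod_cast hm
  have hd0 : (0 : ℝ) < d := by exact_mod_cast hd
  refine ⟨2 * (m * d) * c₂ * ((1 + 3 ^ p) * 3 ^ (p - 1)), by positivity, fun A B => ?_⟩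
  have hpow : (1 + ‖A‖ + ‖B‖) ^ (p - 1) ≤ 3 ^ (p - 1) * (1 + ‖A‖ ^ (p - 1) + ‖B‖ ^ (p - 1)) := by
    simpa using Real.rpow_add_add_le zero_le_one (norm_nonneg A) (norm_nonneg B) (by linarith)
  calc |σ A - σ B|
      ≤ m * d * (2 * (c₂ * (1 + (3 * (1 + ‖A‖ + ‖B‖)) ^ p)) / (1 + ‖A‖ + ‖B‖) * ‖A - B‖) := by
        simpa using abs_sub_le_of_separatelyConvex hc₂.le (by linarith) hsepconv hbound A B
    _ = 2 * (m * d) * c₂ * ((1 + (3 * (1 + ‖A‖ + ‖B‖)) ^ p) / (1 + ‖A‖ + ‖B‖)) * ‖A - B‖ := by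
        ring
    _ ≤ 2 * (m * d) * c₂ * ((1 + 3 ^ p) * (3 ^ (p - 1) * (1 + ‖A‖ ^ (p - 1) + ‖B‖ ^ (p - 1))))
          * ‖A - B‖ := by
        gcongr
        calc _ ≤ (1 + 3 ^ p) * (1 + ‖A‖ + ‖B‖) ^ (p - 1) :=
              one_add_rpow_three_mul_div_le (by linarith [norm_nonneg A, norm_nonneg B]) hp
          _ ≤ _ := by gcongr
    _ = _ := by ring
end

section
/- Let p > 1 and let σ : ℝ^{m×d} → ℝ satisfy the local Lipschitz estimate |σ(A) − σ(B)| ≤ C (1 + ‖A‖^{p−1} + ‖B‖^{p−1}) ‖A − B‖ for all matrices A, B, and admit a recession function σ₀. Then σ₀ satisfies |σ₀(A) − σ₀(B)| ≤ C (‖A‖^{p−1} + ‖B‖^{p−1}) ‖A − B‖ for all matrices A, B; in particular σ₀ is continuous. -/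
open Filter Topology

attribute [local instance] Matrix.frobeniusNormedAddCommGroup Matrix.frobeniusNormedSpace

section Recession

variable {E : Type*} [NormedAddCommGroup E] [NormedSpace ℝ E]

/-- After rescaling, the constant term `1` of the estimate becomes `t ^ (-(p - 1))`, which
vanishes as `t → ∞` when `p > 1`. -/
theorem abs_sub_smul_div_rpow_le {σ : E → ℝ} {p C : ℝ}
    (hlip : ∀ A B, |σ A - σ B| ≤ C * (1 + ‖A‖ ^ (p - 1) + ‖B‖ ^ (p - 1)) * ‖A - B‖)
    (A B : E) {t : ℝ} (ht : 0 < t) :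
    |σ (t • A) / t ^ p - σ (t • B) / t ^ p| ≤
      C * (t ^ (-(p - 1)) + ‖A‖ ^ (p - 1) + ‖B‖ ^ (p - 1)) * ‖A - B‖ := by
  have htp : 0 < t ^ p := Real.rpow_pos_of_pos ht p
  rw [div_sub_div_same, abs_div, abs_of_pos htp, div_le_iff₀ htp]
  calc |σ (t • A) - σ (t • B)|
      ≤ C * (1 + ‖t • A‖ ^ (p - 1) + ‖t • B‖ ^ (p - 1)) * ‖t • A - t • B‖ := hlip _ _
    _ = C * (t ^ (-(p - 1)) + ‖A‖ ^ (p - 1) + ‖B‖ ^ (p - 1)) * ‖A - B‖ * t ^ p := by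
      rw [← smul_sub, norm_smul_of_nonneg ht.le, norm_smul_of_nonneg ht.le,
        norm_smul_of_nonneg ht.le, Real.mul_rpow ht.le (norm_nonneg A),
        Real.mul_rpow ht.le (norm_nonneg B), Real.rpow_neg ht.le,
        show p = (p - 1) + 1 by ring, Real.rpow_add ht, Real.rpow_one]
      field_simp
      ring_nf

theorem abs_sub_le_of_tendsto_div_rpow {σ σ₀ : E → ℝ} {p C : ℝ} (hp : 1 < p)
    (hlip : ∀ A B, |σ A - σ B| ≤ C * (1 + ‖A‖ ^ (p - 1) + ‖B‖ ^ (p - 1)) * ‖A - B‖)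
    (hrec : ∀ ξ, Tendsto (fun t : ℝ => σ (t • ξ) / t ^ p) atTop (𝓝 (σ₀ ξ))) (A B : E) :
    |σ₀ A - σ₀ B| ≤ C * (‖A‖ ^ (p - 1) + ‖B‖ ^ (p - 1)) * ‖A - B‖ := by
  have hlhs := ((hrec A).sub (hrec B)).abs
  have hrhs : Tendsto (fun t : ℝ => C * (t ^ (-(p - 1)) + ‖A‖ ^ (p - 1) + ‖B‖ ^ (p - 1)) * ‖A - B‖)
      atTop (𝓝 (C * (0 + ‖A‖ ^ (p - 1) + ‖B‖ ^ (p - 1)) * ‖A - B‖)) :=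
    (tendsto_const_nhds.mul (((tendsto_rpow_neg_atTop (by linarith)).add
      tendsto_const_nhds).add tendsto_const_nhds)).mul tendsto_const_nhds
  rw [zero_add] at hrhs
  exact le_of_tendsto_of_tendsto hlhs hrhs <| (eventually_gt_atTop 0).mono fun t ht =>
    abs_sub_smul_div_rpow_le hlip A B ht

end Recession

theorem continuous_of_abs_sub_le_rpow_norm_mul {E : Type*} [SeminormedAddCommGroup E]
    {f : E → ℝ} {C q : ℝ} (hq : 0 ≤ q)
    (h : ∀ A B, |f A - f B| ≤ C * (‖A‖ ^ q + ‖B‖ ^ q) * ‖A - B‖) : Continuous f := by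
  refine continuous_iff_continuousAt.2 fun A => tendsto_iff_norm_sub_tendsto_zero.2 ?_
  have hbound : Continuous fun B : E => C * (‖B‖ ^ q + ‖A‖ ^ q) * ‖B - A‖ := by
    fun_prop (disch := exact fun _ => Or.inr hq)
  refine squeeze_zero (fun _ => norm_nonneg _) (fun B => h B A) ?_
  simpa using hbound.tendsto A

theorem stmt_8_general (d m : ℕ) (p : ℝ) (hp : 1 < p) (C : ℝ)
    (σ σ₀ : Matrix (Fin m) (Fin d) ℝ → ℝ)
    (hlip : ∀ A B : Matrix (Fin m) (Fin d) ℝ,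
      |σ A - σ B| ≤ C * (1 + ‖A‖ ^ (p - 1) + ‖B‖ ^ (p - 1)) * ‖A - B‖)
    (hrec : ∀ ξ : Matrix (Fin m) (Fin d) ℝ,
      Tendsto (fun t : ℝ => σ (t • ξ) / t ^ p) atTop (𝓝 (σ₀ ξ))) :
    (∀ A B : Matrix (Fin m) (Fin d) ℝ,
        |σ₀ A - σ₀ B| ≤ C * (‖A‖ ^ (p - 1) + ‖B‖ ^ (p - 1)) * ‖A - B‖) ∧
      Continuous σ₀ := by
  have hσ₀ := abs_sub_le_of_tendsto_div_rpow hp hlip hrec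
  exact ⟨hσ₀, continuous_of_abs_sub_le_rpow_norm_mul (by linarith) hσ₀⟩

/-- If `σ` satisfies the local Lipschitz estimate
`|σ(A) − σ(B)| ≤ C(1 + ‖A‖^{p−1} + ‖B‖^{p−1})‖A − B‖` and admits a recession function `σ₀`
of exponent `p > 1`, then `|σ₀(A) − σ₀(B)| ≤ C(‖A‖^{p−1} + ‖B‖^{p−1})‖A − B‖`; in
particular `σ₀` is continuous. -/
theorem stmt_8 (d m : ℕ) (hd : 1 ≤ d) (hm : 1 ≤ m) (p : ℝ) (hp : 1 < p) (C : ℝ) (hC : 0 < C)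
    (σ σ₀ : Matrix (Fin m) (Fin d) ℝ → ℝ)
    (hlip : ∀ A B : Matrix (Fin m) (Fin d) ℝ,
      |σ A - σ B| ≤ C * (1 + ‖A‖ ^ (p - 1) + ‖B‖ ^ (p - 1)) * ‖A - B‖)
    (hrec : ∀ ξ : Matrix (Fin m) (Fin d) ℝ,
      Tendsto (fun t : ℝ => σ (t • ξ) / t ^ p) atTop (𝓝 (σ₀ ξ))) :
    (∀ A B : Matrix (Fin m) (Fin d) ℝ,
        |σ₀ A - σ₀ B| ≤ C * (‖A‖ ^ (p - 1) + ‖B‖ ^ (p - 1)) * ‖A - B‖) ∧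
      Continuous σ₀ :=
  stmt_8_general d m p hp C σ σ₀ hlip hrec
end

section
/- Let d, m ≥ 1 and 1 ≤ p < ∞. Let Q = (−1/2, 1/2)^d be the open unit cube, let C₁ = B(0, 1/4) \ closure(B(0, 1/16)) be a reference annulus, and for ρ ∈ (0,1) set C_ρ = ρ·C₁ = B(0, ρ/4) \ closure(B(0, ρ/16)). Then there exists a constant c = c(p, d) > 0 such that for every continuously differentiable u : Q → ℝ^m with ∫_Q ‖Du‖^p dx < ∞ and every ρ ∈ (0,1), one has ∫_Q |u(x) − u_ρ|^p dx ≤ c ρ^{−d} ∫_Q ‖Du(x)‖^p dx, where u_ρ = |C_ρ|^{−1} ∫_{C_ρ} u(x) dx is the average of u over the annulus C_ρ. -/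
/-!
For `x` in the convex set `Ω` and `y` in `C ⊆ Ω`, Jensen's inequality for the mean over `C`
and the fundamental theorem of calculus along the segment from `y` to `x` give
`‖u x - ⨍_C u‖ ^ p ≤ diam Ω ^ p / |C| * ∫_C ∫₀¹ ‖Du (y + t • (x - y))‖ ^ p dt dy`.
Integrate over `x ∈ Ω` and split the `t`-integral at `1/2`: for `t ≤ 1/2` substitute in `y`, for
`t ≥ 1/2` in `x`. Either substitution is a homothety of ratio at least `1/2`, whose Jacobian is at
most `2 ^ n`, so `∫_Ω ‖u - ⨍_C u‖ ^ p ≤ 2 ^ n diam Ω ^ p |Ω| / |C| * ∫_Ω ‖Du‖ ^ p`.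
For the unit cube `diam Q ≤ √d`, `|Q| = 1` and `|C_ρ| = ρ ^ d |C_1|`.
-/

open MeasureTheory Set Metric ENNReal Module Bornology

theorem convexOn_univ_norm_rpow {F : Type*} [NormedAddCommGroup F] [NormedSpace ℝ F] {p : ℝ}
    (hp : 1 ≤ p) : ConvexOn ℝ univ fun z : F => ‖z‖ ^ p := by
  refine ⟨convex_univ, fun x _ y _ a b ha hb hab => ?_⟩
  calc ‖a • x + b • y‖ ^ p ≤ (a * ‖x‖ + b * ‖y‖) ^ p := by
        gcongr
        refine (norm_add_le _ _).trans_eq ?_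
        rw [norm_smul, norm_smul, Real.norm_of_nonneg ha, Real.norm_of_nonneg hb]
    _ ≤ a • ‖x‖ ^ p + b • ‖y‖ ^ p :=
        (convexOn_rpow hp).2 (norm_nonneg x) (norm_nonneg y) ha hb hab

section Jensen

variable {α F : Type*} [MeasurableSpace α] {μ : Measure α} {s : Set α}
  [NormedAddCommGroup F] [NormedSpace ℝ F] [CompleteSpace F] {p : ℝ}

theorem norm_setAverage_rpow_le (hp : 1 ≤ p) {f : α → F} (hs₀ : μ s ≠ 0) (hs : μ s ≠ ∞)
    (hf : IntegrableOn f s μ) (hfp : IntegrableOn (fun x => ‖f x‖ ^ p) s μ) :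
    ‖⨍ x in s, f x ∂μ‖ ^ p ≤ ⨍ x in s, ‖f x‖ ^ p ∂μ :=
  (convexOn_univ_norm_rpow hp).map_set_average_le (by fun_prop (disch := linarith))
    isClosed_univ hs₀ hs (by simp) hf hfp

theorem ofReal_norm_sub_setAverage_rpow_le (hp : 1 ≤ p) {f : α → F} (a : F) (hs₀ : μ s ≠ 0)
    (hs : μ s ≠ ∞) (hf : IntegrableOn f s μ) (hfp : IntegrableOn (fun x => ‖a - f x‖ ^ p) s μ) :
    ENNReal.ofReal (‖a - ⨍ x in s, f x ∂μ‖ ^ p) ≤ ⨍⁻ x in s, ENNReal.ofReal (‖a - f x‖ ^ p) ∂μ := by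
  have hmean : a - ⨍ x in s, f x ∂μ = ⨍ x in s, (a - f x) ∂μ := by
    conv_lhs => rw [← setAverage_const hs₀ hs a]
    simp only [setAverage_eq, integral_sub (integrableOn_const (C := a) hs) hf, smul_sub]
  rw [hmean, setLAverage_eq, ← ofReal_setAverage hfp (ae_of_all _ fun _ => by positivity)]
  exact ENNReal.ofReal_le_ofReal
    (norm_setAverage_rpow_le hp hs₀ hs ((integrableOn_const (C := a) hs).sub hf) hfp)

end Jensen

section Segment

variable {E F : Type*} [NormedAddCommGroup E] [NormedSpace ℝ E] [NormedAddCommGroup F]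
  [NormedSpace ℝ F] [CompleteSpace F] {p : ℝ} {u : E → F}

theorem norm_sub_rpow_le_setIntegral_fderiv (hu : ContDiff ℝ 1 u) (hp : 1 ≤ p) (x y : E) :
    ‖u x - u y‖ ^ p ≤ ‖x - y‖ ^ p * ∫ t in Ioc (0 : ℝ) 1, ‖fderiv ℝ u (y + t • (x - y))‖ ^ p := by
  have hDu : Continuous (fderiv ℝ u) := hu.continuous_fderiv one_ne_zero
  set g : ℝ → F := fun t => fderiv ℝ u (y + t • (x - y)) (x - y)
  have hg : Continuous g := by fun_prop
  have hftc : u x - u y = ∫ t in Ioc (0 : ℝ) 1, g t := by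
    rw [← intervalIntegral.integral_of_le zero_le_one,
      intervalIntegral.integral_eq_sub_of_hasDerivAt (f := fun t => u (y + t • (x - y)))
        (fun t _ => ?_) (hg.intervalIntegrable 0 1)]
    · simp
    · exact (hu.differentiable one_ne_zero _).hasFDerivAt.comp_hasDerivAt t
        (((hasDerivAt_id t).smul_const (x - y)).const_add y |>.congr_deriv (one_smul _ _))
  have hunit : volume (Ioc (0 : ℝ) 1) = 1 := by simp
  have haverage : ⨍ t in Ioc (0 : ℝ) 1, g t = ∫ t in Ioc (0 : ℝ) 1, g t := by
    simp [setAverage_eq, measureReal_def, hunit]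
  calc ‖u x - u y‖ ^ p ≤ ∫ t in Ioc (0 : ℝ) 1, ‖g t‖ ^ p := by
        rw [hftc, ← haverage]
        refine (norm_setAverage_rpow_le hp (by simp [hunit]) (by simp [hunit])
          hg.integrableOn_Ioc
          (Continuous.integrableOn_Ioc (by fun_prop (disch := linarith)))).trans_eq ?_
        simp [setAverage_eq, measureReal_def, hunit]
    _ ≤ ∫ t in Ioc (0 : ℝ) 1, ‖x - y‖ ^ p * ‖fderiv ℝ u (y + t • (x - y))‖ ^ p := by
        refine setIntegral_mono_on (Continuous.integrableOn_Ioc (by fun_prop (disch := linarith)))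
          (Continuous.integrableOn_Ioc (by fun_prop (disch := linarith))) measurableSet_Ioc
          fun t _ => ?_
        rw [← Real.mul_rpow (norm_nonneg _) (norm_nonneg _), mul_comm]
        gcongr
        exact (fderiv ℝ u _).le_opNorm _
    _ = ‖x - y‖ ^ p * ∫ t in Ioc (0 : ℝ) 1, ‖fderiv ℝ u (y + t • (x - y))‖ ^ p :=
        integral_const_mul _ _

theorem ofReal_norm_sub_rpow_le_segment {Ω : Set E} (hu : ContDiff ℝ 1 u) (hp : 1 ≤ p)
    (hΩ : Convex ℝ Ω) (hΩb : IsBounded Ω) {x y : E} (hx : x ∈ Ω) (hy : y ∈ Ω) :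
    ENNReal.ofReal (‖u x - u y‖ ^ p) ≤ ENNReal.ofReal (diam Ω ^ p) *
      ∫⁻ t in Ioc (0 : ℝ) 1, Ω.indicator (fun z => ENNReal.ofReal (‖fderiv ℝ u z‖ ^ p))
        (y + t • (x - y)) := by
  have hDu : Continuous (fderiv ℝ u) := hu.continuous_fderiv one_ne_zero
  have hxy : ‖x - y‖ ≤ diam Ω := by
    rw [← dist_eq_norm]; exact dist_le_diam_of_mem hΩb hx hy
  calc ENNReal.ofReal (‖u x - u y‖ ^ p)
      ≤ ENNReal.ofReal (diam Ω ^ p * ∫ t in Ioc (0 : ℝ) 1, ‖fderiv ℝ u (y + t • (x - y))‖ ^ p) := by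
        refine ENNReal.ofReal_le_ofReal ((norm_sub_rpow_le_setIntegral_fderiv hu hp x y).trans ?_)
        gcongr
    _ = ENNReal.ofReal (diam Ω ^ p) *
          ∫⁻ t in Ioc (0 : ℝ) 1, ENNReal.ofReal (‖fderiv ℝ u (y + t • (x - y))‖ ^ p) := by
        rw [ENNReal.ofReal_mul (by positivity), ofReal_integral_eq_lintegral_ofReal
          (Continuous.integrableOn_Ioc (by fun_prop (disch := linarith)))
          (ae_of_all _ fun t => by positivity)]
    _ = _ := by
        congr 1
        refine setLIntegral_congr_fun measurableSet_Ioc fun t ht => ?_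
        rw [indicator_of_mem (hΩ.add_smul_sub_mem hy hx (Ioc_subset_Icc_self ht))]

end Segment

theorem Continuous.integrableOn_of_isBounded {X V : Type*} [MetricSpace X] [ProperSpace X]
    [MeasurableSpace X] [OpensMeasurableSpace X] {μ : Measure X} [IsFiniteMeasureOnCompacts μ]
    [NormedAddCommGroup V] {f : X → V} {s : Set X} (hf : Continuous f) (hs : IsBounded s) :
    IntegrableOn f s μ :=
  (hf.continuousOn.integrableOn_compact hs.isCompact_closure).mono_set subset_closure

theorem measure_ball_diff_closedBall_pos {E : Type*} [NormedAddCommGroup E] [NormedSpace ℝ E]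
    [Nontrivial E] [MeasurableSpace E] (μ : Measure E)
    [μ.IsOpenPosMeasure] {r r' : ℝ} (hr' : 0 ≤ r') (h : r' < r) :
    0 < μ (ball (0 : E) r \ closedBall 0 r') := by
  obtain ⟨v, hv⟩ := exists_norm_eq E (by linarith : 0 ≤ (r + r') / 2)
  refine isOpen_ball.sdiff isClosed_closedBall |>.measure_pos μ ⟨v, ?_, ?_⟩
  · rw [mem_ball_zero_iff, hv]; linarith
  · rw [mem_closedBall_zero_iff, hv]; linarith

section AddHaar

variable {E : Type*} [NormedAddCommGroup E] [NormedSpace ℝ E] [FiniteDimensional ℝ E]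
  [MeasurableSpace E] [BorelSpace E] (μ : Measure E) [μ.IsAddHaarMeasure]

theorem lintegral_comp_homothety {F : E → ℝ≥0∞} (hF : Measurable F) (a : E) {s : ℝ}
    (hs : s ≠ 0) :
    ∫⁻ x, F (a + s • (x - a)) ∂μ = ENNReal.ofReal |(s ^ finrank ℝ E)⁻¹| * ∫⁻ x, F x ∂μ := by
  have hshift : ∀ x : E, a + s • (x - a) = (a - s • a) + s • x := fun x => by
    rw [smul_sub]; abel
  simp_rw [hshift]
  calc ∫⁻ x, F (a - s • a + s • x) ∂μ = ∫⁻ z, F (a - s • a + z) ∂(Measure.map (s • ·) μ) :=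
        (lintegral_map (hF.comp (measurable_const_add _)) (measurable_const_smul s)).symm
    _ = _ := by
        rw [Measure.map_addHaar_smul μ hs, lintegral_smul_measure, lintegral_add_left_eq_self,
          smul_eq_mul]

theorem lintegral_comp_homothety_le {F : E → ℝ≥0∞} (hF : Measurable F) (a : E) {s : ℝ}
    (hs : 1 / 2 ≤ s) :
    ∫⁻ x, F (a + s • (x - a)) ∂μ ≤ 2 ^ finrank ℝ E * ∫⁻ x, F x ∂μ := by
  have hs₀ : 0 < s := by linarith
  rw [lintegral_comp_homothety μ hF a hs₀.ne']
  gcongr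
  rw [abs_of_pos (by positivity), ← ENNReal.ofReal_ofNat 2, ← ENNReal.ofReal_pow zero_le_two,
    ← inv_pow]
  gcongr
  rw [inv_le_comm₀ hs₀ two_pos]; linarith

theorem setLIntegral_lintegral_comp_segment_start_le {F : E → ℝ≥0∞} (hF : Measurable F) (x : E) :
    ∫⁻ t in Ioc (0 : ℝ) (1 / 2), ∫⁻ y, F (y + t • (x - y)) ∂μ
      ≤ 2 ^ finrank ℝ E * (∫⁻ z, F z ∂μ) / 2 := by
  calc ∫⁻ t in Ioc (0 : ℝ) (1 / 2), ∫⁻ y, F (y + t • (x - y)) ∂μ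
      ≤ ∫⁻ _ in Ioc (0 : ℝ) (1 / 2), 2 ^ finrank ℝ E * ∫⁻ z, F z ∂μ := by
        refine setLIntegral_mono' measurableSet_Ioc fun t ht => ?_
        have hsymm : ∀ y : E, y + t • (x - y) = x + (1 - t) • (y - x) := fun y => by
          rw [sub_smul, one_smul, smul_sub, smul_sub]; abel
        simp_rw [hsymm]
        exact lintegral_comp_homothety_le μ hF x (by linarith [ht.2])
    _ = _ := by
        rw [setLIntegral_const, Real.volume_Ioc]
        norm_num [ENNReal.ofReal_div_of_pos, div_eq_mul_inv]

theorem setLIntegral_lintegral_comp_segment_end_le {F : E → ℝ≥0∞} (hF : Measurable F) (y : E) :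
    ∫⁻ t in Ioc (1 / 2 : ℝ) 1, ∫⁻ x, F (y + t • (x - y)) ∂μ
      ≤ 2 ^ finrank ℝ E * (∫⁻ z, F z ∂μ) / 2 := by
  calc ∫⁻ t in Ioc (1 / 2 : ℝ) 1, ∫⁻ x, F (y + t • (x - y)) ∂μ
      ≤ ∫⁻ _ in Ioc (1 / 2 : ℝ) 1, 2 ^ finrank ℝ E * ∫⁻ z, F z ∂μ :=
        setLIntegral_mono' measurableSet_Ioc fun t ht =>
          lintegral_comp_homothety_le μ hF y ht.1.le
    _ = _ := by
        rw [setLIntegral_const, Real.volume_Ioc]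
        norm_num [ENNReal.ofReal_div_of_pos, div_eq_mul_inv]

theorem measurable_setLIntegral_comp_segment {F : E → ℝ≥0∞} (hF : Measurable F) (S : Set ℝ) :
    Measurable fun q : E × E => ∫⁻ t in S, F (q.2 + t • (q.1 - q.2)) :=
  Measurable.lintegral_prod_right'
    (f := fun q : (E × E) × ℝ => F (q.1.2 + q.2 • (q.1.1 - q.1.2))) (by fun_prop)

theorem setLIntegral_segment_le {F : E → ℝ≥0∞} (hF : Measurable F) {Ω C : Set E}
    (hCΩ : C ⊆ Ω) :
    ∫⁻ x in Ω, ∫⁻ y in C, ∫⁻ t in Ioc (0 : ℝ) 1, F (y + t • (x - y)) ∂volume ∂μ ∂μ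
      ≤ 2 ^ finrank ℝ E * μ Ω * ∫⁻ z, F z ∂μ := by
  set K := 2 ^ finrank ℝ E * ∫⁻ z, F z ∂μ
  have hinner := measurable_setLIntegral_comp_segment hF
  have hmeas_y : ∀ S x, Measurable fun y : E => ∫⁻ t in S, F (y + t • (x - y)) := fun S x =>
    (hinner S).comp measurable_prodMk_left
  have hmeas_x : ∀ S,
      Measurable fun x : E => ∫⁻ y in C, ∫⁻ t in S, F (y + t • (x - y)) ∂volume ∂μ := fun S =>
    (hinner S).lintegral_prod_right'
  have hsplit : ∀ x y : E, ∫⁻ t in Ioc (0 : ℝ) 1, F (y + t • (x - y))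
      = (∫⁻ t in Ioc (0 : ℝ) (1 / 2), F (y + t • (x - y)))
        + ∫⁻ t in Ioc (1 / 2 : ℝ) 1, F (y + t • (x - y)) := fun x y => by
    rw [← Ioc_union_Ioc_eq_Ioc (b := (1 / 2 : ℝ)) (by norm_num) (by norm_num),
      lintegral_union measurableSet_Ioc (Ioc_disjoint_Ioc_of_le le_rfl)]
  have hstart : ∀ x,
      ∫⁻ y in C, ∫⁻ t in Ioc (0 : ℝ) (1 / 2), F (y + t • (x - y)) ∂volume ∂μ ≤ K / 2 := fun x => by
    rw [lintegral_lintegral_swap (by fun_prop)]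
    exact (setLIntegral_mono' measurableSet_Ioc fun t _ => setLIntegral_le_lintegral _ _).trans
      (setLIntegral_lintegral_comp_segment_start_le μ hF x)
  have hend : ∀ y,
      ∫⁻ x in Ω, ∫⁻ t in Ioc (1 / 2 : ℝ) 1, F (y + t • (x - y)) ∂volume ∂μ ≤ K / 2 := fun y => by
    rw [lintegral_lintegral_swap (by fun_prop)]
    exact (setLIntegral_mono' measurableSet_Ioc fun t _ => setLIntegral_le_lintegral _ _).trans
      (setLIntegral_lintegral_comp_segment_end_le μ hF y)
  calc ∫⁻ x in Ω, ∫⁻ y in C, ∫⁻ t in Ioc (0 : ℝ) 1, F (y + t • (x - y)) ∂volume ∂μ ∂μ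
      = (∫⁻ x in Ω, ∫⁻ y in C, ∫⁻ t in Ioc (0 : ℝ) (1 / 2), F (y + t • (x - y)) ∂volume ∂μ ∂μ)
        + ∫⁻ y in C, ∫⁻ x in Ω, ∫⁻ t in Ioc (1 / 2 : ℝ) 1, F (y + t • (x - y)) ∂volume ∂μ ∂μ := by
        simp_rw [hsplit, lintegral_add_left (hmeas_y _ _), lintegral_add_left (hmeas_x _)]
        congr 1
        exact lintegral_lintegral_swap (hinner _).aemeasurable
    _ ≤ (∫⁻ _ in Ω, K / 2 ∂μ) + ∫⁻ _ in C, K / 2 ∂μ :=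
        add_le_add (lintegral_mono hstart) (lintegral_mono hend)
    _ ≤ μ Ω * (K / 2) + μ Ω * (K / 2) := by
        rw [setLIntegral_const, setLIntegral_const, mul_comm, mul_comm (K / 2)]
        gcongr
    _ = 2 ^ finrank ℝ E * μ Ω * ∫⁻ z, F z ∂μ := by
        rw [← mul_add, ENNReal.add_halves]; ring

theorem addHaar_ball_diff_closedBall_mul {ρ r r' : ℝ} (hρ : 0 < ρ) (hr' : 0 ≤ r') :
    μ (ball (0 : E) (ρ * r) \ closedBall 0 (ρ * r'))
      = ENNReal.ofReal (ρ ^ finrank ℝ E) * μ (ball 0 r \ closedBall 0 r') := by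
  rw [← Measure.addHaar_smul_of_nonneg μ hρ.le, smul_set_sdiff₀ hρ.ne', _root_.smul_ball hρ.ne',
    _root_.smul_closedBall _ _ hr', smul_zero, Real.norm_of_nonneg hρ.le]

section Poincare

variable {F : Type*} [NormedAddCommGroup F] [NormedSpace ℝ F] [CompleteSpace F] {p : ℝ}
  {u : E → F} {Ω C : Set E}

theorem setLIntegral_norm_sub_setAverage_rpow_le (hu : ContDiff ℝ 1 u) (hp : 1 ≤ p)
    (hΩ : Convex ℝ Ω) (hΩm : MeasurableSet Ω) (hΩb : IsBounded Ω) (hCm : MeasurableSet C)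
    (hCΩ : C ⊆ Ω) (hC : μ C ≠ 0) :
    ∫⁻ x in Ω, ENNReal.ofReal (‖u x - ⨍ y in C, u y ∂μ‖ ^ p) ∂μ
      ≤ 2 ^ finrank ℝ E * ENNReal.ofReal (diam Ω ^ p) * μ Ω / μ C *
        ∫⁻ x in Ω, ENNReal.ofReal (‖fderiv ℝ u x‖ ^ p) ∂μ := by
  set G := Ω.indicator fun z => ENNReal.ofReal (‖fderiv ℝ u z‖ ^ p)
  have hG : Measurable G := by
    have hDu : Continuous (fderiv ℝ u) := hu.continuous_fderiv one_ne_zero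
    exact Measurable.indicator (by fun_prop (disch := linarith)) hΩm
  have hCb : IsBounded C := hΩb.subset hCΩ
  have hCfin : μ C ≠ ∞ := hCb.measure_lt_top.ne
  have hpoint : ∀ x ∈ Ω, ENNReal.ofReal (‖u x - ⨍ y in C, u y ∂μ‖ ^ p)
      ≤ ENNReal.ofReal (diam Ω ^ p) / μ C *
        ∫⁻ y in C, ∫⁻ t in Ioc (0 : ℝ) 1, G (y + t • (x - y)) ∂volume ∂μ := by
    intro x hx
    have hcont : Continuous fun y => ‖u x - u y‖ ^ p := by
      have := hu.continuous; fun_prop (disch := linarith)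
    refine (ofReal_norm_sub_setAverage_rpow_le hp (u x) hC hCfin
      (hu.continuous.integrableOn_of_isBounded hCb) (hcont.integrableOn_of_isBounded hCb)).trans ?_
    rw [setLAverage_eq, ENNReal.div_eq_inv_mul, ENNReal.div_eq_inv_mul, mul_assoc,
      ← lintegral_const_mul' _ _ ENNReal.ofReal_ne_top]
    exact mul_le_mul_right (setLIntegral_mono' hCm fun y hy =>
      ofReal_norm_sub_rpow_le_segment hu hp hΩ hΩb hx (hCΩ hy)) _
  calc ∫⁻ x in Ω, ENNReal.ofReal (‖u x - ⨍ y in C, u y ∂μ‖ ^ p) ∂μ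
      ≤ ∫⁻ x in Ω, ENNReal.ofReal (diam Ω ^ p) / μ C *
          ∫⁻ y in C, ∫⁻ t in Ioc (0 : ℝ) 1, G (y + t • (x - y)) ∂volume ∂μ ∂μ :=
        setLIntegral_mono' hΩm hpoint
    _ = ENNReal.ofReal (diam Ω ^ p) / μ C *
          ∫⁻ x in Ω, ∫⁻ y in C, ∫⁻ t in Ioc (0 : ℝ) 1, G (y + t • (x - y)) ∂volume ∂μ ∂μ :=
        lintegral_const_mul' _ _ (ENNReal.div_ne_top ENNReal.ofReal_ne_top hC)
    _ ≤ ENNReal.ofReal (diam Ω ^ p) / μ C * (2 ^ finrank ℝ E * μ Ω * ∫⁻ x, G x ∂μ) := by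
        gcongr
        exact setLIntegral_segment_le μ hG hCΩ
    _ = _ := by
        rw [lintegral_indicator hΩm]
        simp only [div_eq_mul_inv]
        ring

theorem setIntegral_norm_sub_setAverage_rpow_le (hu : ContDiff ℝ 1 u) (hp : 1 ≤ p)
    (hΩ : Convex ℝ Ω) (hΩm : MeasurableSet Ω) (hΩb : IsBounded Ω) (hCm : MeasurableSet C)
    (hCΩ : C ⊆ Ω) (hC : μ C ≠ 0) (hDu : IntegrableOn (fun x => ‖fderiv ℝ u x‖ ^ p) Ω μ) :
    ∫ x in Ω, ‖u x - ⨍ y in C, u y ∂μ‖ ^ p ∂μ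
      ≤ 2 ^ finrank ℝ E * diam Ω ^ p * μ.real Ω / μ.real C *
        ∫ x in Ω, ‖fderiv ℝ u x‖ ^ p ∂μ := by
  have hcont : Continuous fun x => ‖u x - ⨍ y in C, u y ∂μ‖ ^ p := by
    have := hu.continuous; fun_prop (disch := linarith)
  have hDu_fin : ∫⁻ x in Ω, ENNReal.ofReal (‖fderiv ℝ u x‖ ^ p) ∂μ ≠ ∞ :=
    ((hasFiniteIntegral_iff_ofReal (ae_of_all _ fun _ => by positivity)).1 hDu.2).ne
  rw [integral_eq_lintegral_of_nonneg_ae (ae_of_all _ fun _ => by positivity)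
      hcont.aestronglyMeasurable,
    integral_eq_lintegral_of_nonneg_ae (ae_of_all _ fun _ => by positivity) hDu.1]
  refine (ENNReal.toReal_mono ?_
    (setLIntegral_norm_sub_setAverage_rpow_le μ hu hp hΩ hΩm hΩb hCm hCΩ hC)).trans_eq ?_
  · have hΩfin : μ Ω ≠ ∞ := hΩb.measure_lt_top.ne
    exact ENNReal.mul_ne_top (ENNReal.div_ne_top (by finiteness) hC) hDu_fin
  · have hdiam : 0 ≤ diam Ω ^ p := by positivity
    simp [ENNReal.toReal_mul, ENNReal.toReal_div, measureReal_def, hdiam]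

end Poincare

end AddHaar

def unitCube (d : ℕ) : Set (EuclideanSpace ℝ (Fin d)) :=
  {x | ∀ i, x i ∈ Ioo (-(1 / 2) : ℝ) (1 / 2)}

section UnitCube

variable {d : ℕ}

theorem unitCube_eq_preimage_ofLp :
    unitCube d = WithLp.ofLp ⁻¹' univ.pi fun _ => Ioo (-(1 / 2) : ℝ) (1 / 2) := by
  ext x; simp [unitCube]

theorem isOpen_unitCube : IsOpen (unitCube d) := by
  rw [unitCube_eq_preimage_ofLp]
  exact (isOpen_set_pi finite_univ fun _ _ => isOpen_Ioo).preimage (PiLp.continuous_ofLp 2 _)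

theorem convex_unitCube : Convex ℝ (unitCube d) := by
  rw [unitCube_eq_preimage_ofLp]
  exact (convex_pi fun _ _ => convex_Ioo _ _).linear_preimage
    (WithLp.linearEquiv 2 ℝ (Fin d → ℝ)).toLinearMap

theorem volume_unitCube : volume (unitCube d) = 1 := by
  rw [unitCube_eq_preimage_ofLp, (PiLp.volume_preserving_ofLp _).measure_preimage
    (MeasurableSet.univ_pi fun _ => measurableSet_Ioo).nullMeasurableSet, volume_pi_pi]
  norm_num

theorem norm_sub_le_sqrt_of_mem_unitCube {x y : EuclideanSpace ℝ (Fin d)} (hx : x ∈ unitCube d)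
    (hy : y ∈ unitCube d) : ‖x - y‖ ≤ √d := by
  rw [EuclideanSpace.norm_eq]
  gcongr
  calc ∑ i, ‖(x - y) i‖ ^ 2 ≤ ∑ _ : Fin d, (1 : ℝ) := by
        gcongr with i
        have := hx i; have := hy i
        simp only [mem_Ioo, PiLp.sub_apply, Real.norm_eq_abs, sq_abs] at *
        nlinarith
    _ = d := by simp

theorem isBounded_unitCube : IsBounded (unitCube d) :=
  isBounded_iff.2 ⟨√d, fun _ hx _ hy =>
    (dist_eq_norm _ _).trans_le (norm_sub_le_sqrt_of_mem_unitCube hx hy)⟩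

theorem diam_unitCube_le : diam (unitCube d) ≤ √d :=
  diam_le_of_forall_dist_le (Real.sqrt_nonneg _) fun _ hx _ hy =>
    (dist_eq_norm _ _).trans_le (norm_sub_le_sqrt_of_mem_unitCube hx hy)

theorem ball_subset_unitCube : ball 0 (1 / 2) ⊆ unitCube d := fun x hx i => by
  have := (PiLp.norm_apply_le x i).trans_lt (mem_ball_zero_iff.1 hx)
  rw [Real.norm_eq_abs] at this
  exact abs_lt.1 this

end UnitCube

theorem stmt_11_general (d m : ℕ) (hd : 1 ≤ d) (p : ℝ) (hp : 1 ≤ p) :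
    ∃ c : ℝ, 0 < c ∧
      ∀ u : EuclideanSpace ℝ (Fin d) → EuclideanSpace ℝ (Fin m), ContDiff ℝ 1 u →
        IntegrableOn (fun x => ‖fderiv ℝ u x‖ ^ p)
          {x : EuclideanSpace ℝ (Fin d) | ∀ i, x i ∈ Ioo (-(1 / 2) : ℝ) (1 / 2)} volume →
        ∀ ρ ∈ Ioo (0 : ℝ) 1,
          (∫ x in {x : EuclideanSpace ℝ (Fin d) | ∀ i, x i ∈ Ioo (-(1 / 2) : ℝ) (1 / 2)},
              ‖u x - (volume (Metric.ball (0 : EuclideanSpace ℝ (Fin d)) (ρ / 4) \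
                        Metric.closedBall 0 (ρ / 16))).toReal⁻¹ •
                      ∫ y in Metric.ball (0 : EuclideanSpace ℝ (Fin d)) (ρ / 4) \
                        Metric.closedBall 0 (ρ / 16), u y‖ ^ p)
            ≤ c / ρ ^ d *
              ∫ x in {x : EuclideanSpace ℝ (Fin d) | ∀ i, x i ∈ Ioo (-(1 / 2) : ℝ) (1 / 2)},
                ‖fderiv ℝ u x‖ ^ p := by
  have : Nonempty (Fin d) := ⟨⟨0, hd⟩⟩
  set K := volume (ball (0 : EuclideanSpace ℝ (Fin d)) (1 / 4) \ closedBall 0 (1 / 16))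
  have hK₀ : K ≠ 0 := (measure_ball_diff_closedBall_pos volume (by norm_num) (by norm_num)).ne'
  have hK : 0 < K.toReal :=
    ENNReal.toReal_pos hK₀ (isBounded_ball.subset sdiff_subset).measure_lt_top.ne
  refine ⟨2 ^ d * √d ^ p / K.toReal, by positivity, fun u hu hDu ρ hρ => ?_⟩
  have hC : volume (ball (0 : EuclideanSpace ℝ (Fin d)) (ρ / 4) \ closedBall 0 (ρ / 16))
      = ENNReal.ofReal (ρ ^ d) * K := by
    rw [div_eq_mul_one_div ρ 4, div_eq_mul_one_div ρ 16,
      addHaar_ball_diff_closedBall_mul volume hρ.1 (by norm_num), finrank_euclideanSpace_fin]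
  have hCQ : ball (0 : EuclideanSpace ℝ (Fin d)) (ρ / 4) \ closedBall 0 (ρ / 16) ⊆ unitCube d :=
    sdiff_subset.trans ((ball_subset_ball (by linarith [hρ.2])).trans ball_subset_unitCube)
  rw [← measureReal_def, ← setAverage_eq]
  refine (setIntegral_norm_sub_setAverage_rpow_le volume hu hp convex_unitCube
    isOpen_unitCube.measurableSet isBounded_unitCube
    (measurableSet_ball.diff measurableSet_closedBall) hCQ
    (by rw [hC]; exact mul_ne_zero (by simp [hρ.1]) hK₀) hDu).trans ?_
  refine mul_le_mul_of_nonneg_right ?_ (setIntegral_nonneg isOpen_unitCube.measurableSet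
    fun _ _ => Real.rpow_nonneg (norm_nonneg _) p)
  have hρ₀ := hρ.1
  rw [finrank_euclideanSpace_fin, measureReal_def, volume_unitCube, measureReal_def, hC,
    ENNReal.toReal_mul, ENNReal.toReal_ofReal (by positivity), ENNReal.toReal_one, mul_one,
    mul_comm (ρ ^ d), ← div_div]
  gcongr
  exact diam_unitCube_le

/-- scaled Poincaré inequality on the unit cube
`Q = (−1/2, 1/2)^d`, with the mean taken over the concentric annulus
`C_ρ = B(0, ρ/4) \ closure(B(0, ρ/16))`: there is `c = c(p,d) > 0` such that for every
`C¹` map `u : Q → ℝ^m` with `∫_Q ‖Du‖^p < ∞` and every `ρ ∈ (0,1)`,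
`∫_Q ‖u − u_ρ‖^p ≤ c ρ^{−d} ∫_Q ‖Du‖^p`, where `u_ρ` is the average of `u` on `C_ρ`. -/
theorem stmt_11 (d m : ℕ) (hd : 1 ≤ d) (hm : 1 ≤ m) (p : ℝ) (hp : 1 ≤ p) :
    ∃ c : ℝ, 0 < c ∧
      ∀ u : EuclideanSpace ℝ (Fin d) → EuclideanSpace ℝ (Fin m), ContDiff ℝ 1 u →
        IntegrableOn (fun x => ‖fderiv ℝ u x‖ ^ p)
          {x : EuclideanSpace ℝ (Fin d) | ∀ i, x i ∈ Ioo (-(1 / 2) : ℝ) (1 / 2)} volume →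
        ∀ ρ ∈ Ioo (0 : ℝ) 1,
          (∫ x in {x : EuclideanSpace ℝ (Fin d) | ∀ i, x i ∈ Ioo (-(1 / 2) : ℝ) (1 / 2)},
              ‖u x - (volume (Metric.ball (0 : EuclideanSpace ℝ (Fin d)) (ρ / 4) \
                        Metric.closedBall 0 (ρ / 16))).toReal⁻¹ •
                      ∫ y in Metric.ball (0 : EuclideanSpace ℝ (Fin d)) (ρ / 4) \
                        Metric.closedBall 0 (ρ / 16), u y‖ ^ p)
            ≤ c / ρ ^ d *
              ∫ x in {x : EuclideanSpace ℝ (Fin d) | ∀ i, x i ∈ Ioo (-(1 / 2) : ℝ) (1 / 2)},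
                ‖fderiv ℝ u x‖ ^ p :=
  stmt_11_general d m hd p hp
end

section
/- Let Ψ : ℝ^d → ℝ^d be a C¹ diffeomorphism of ℝ^d onto itself (with everywhere invertible differential DΨ). Then for every continuous compactly supported f : ℝ^d → ℝ, the rescaled lattice sums over Ψ(εℤ^d) converge to a weighted integral: lim_{ε→0⁺} ε^d Σ_{i ∈ ℤ^d} f(Ψ(ε i)) = ∫_{ℝ^d} f(x) |det DΨ(Ψ^{−1}(x))|^{−1} dx. In particular ρ(x) = |det DΨ(Ψ^{−1}(x))|^{−1} is the asymptotic density of the deformed lattice Ψ(εℤ^d). -/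
/-!
Substituting `x = Ψ y` turns the weighted integral into `∫ f (Ψ y) dy`, and `f ∘ Ψ` is again
continuous with compact support, since by the inverse function theorem `Ψ` is an open map and
hence a homeomorphism. It remains to see that the Riemann sums `ε ^ d ∑ g (ε i)` of a continuous
compactly supported `g` tend to `∫ g`: compare `g (ε i)` with `g` on the half-open cube
`ε i + [0, ε) ^ d`. These cubes tile space, and uniform continuity bounds the total error by the
modulus of continuity of `g` at scale `ε` times the volume of the `1`-neighbourhood of its support.
-/

open Filter Topology MeasureTheory

section LatticeCube

variable {ι : Type*}

def latticeCube (ε : ℝ) (i : ι → ℤ) : Set (ι → ℝ) :=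
  Set.univ.pi fun k => Set.Ico (ε * i k) (ε * i k + ε)

variable {ε : ℝ}

theorem mem_latticeCube_iff (hε : 0 < ε) {i : ι → ℤ} {x : ι → ℝ} :
    x ∈ latticeCube ε i ↔ ∀ k, ⌊x k / ε⌋ = i k := by
  simp only [latticeCube, Set.mem_univ_pi, Set.mem_Ico, Int.floor_eq_iff, le_div_iff₀ hε,
    div_lt_iff₀ hε, add_mul, one_mul, mul_comm ε]

theorem measurableSet_latticeCube [Countable ι] (ε : ℝ) (i : ι → ℤ) :
    MeasurableSet (latticeCube ε i) :=
  MeasurableSet.univ_pi fun _ => measurableSet_Ico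

theorem pairwise_disjoint_latticeCube (hε : 0 < ε) :
    Pairwise (Function.onFun Disjoint (latticeCube (ι := ι) ε)) := by
  refine fun i j hij => Set.disjoint_left.mpr fun x hxi hxj => hij (funext fun k => ?_)
  rw [← (mem_latticeCube_iff hε).mp hxi k, (mem_latticeCube_iff hε).mp hxj k]

theorem iUnion_latticeCube (hε : 0 < ε) : ⋃ i, latticeCube (ι := ι) ε i = Set.univ :=
  Set.eq_univ_of_forall fun x =>
    Set.mem_iUnion.mpr ⟨fun k => ⌊x k / ε⌋, (mem_latticeCube_iff hε).mpr fun _ => rfl⟩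

theorem volume_latticeCube [Fintype ι] (hε : 0 ≤ ε) (i : ι → ℤ) :
    volume (latticeCube ε i) = ENNReal.ofReal (ε ^ Fintype.card ι) := by
  simp [latticeCube, volume_pi_pi, Real.volume_Ico, ENNReal.ofReal_pow hε]

theorem dist_le_of_mem_latticeCube [Fintype ι] (hε : 0 ≤ ε) {i : ι → ℤ} {x : ι → ℝ}
    (hx : x ∈ latticeCube ε i) : dist (fun k => ε * i k) x ≤ ε :=
  (dist_pi_le_iff hε).mpr fun k => by
    obtain ⟨h₁, h₂⟩ := hx k (Set.mem_univ k)
    rw [Real.dist_eq, abs_le]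
    constructor <;> linarith

variable {E : Type*} [NormedAddCommGroup E]

theorem hasSum_setIntegral_latticeCube [Fintype ι] [NormedSpace ℝ E] (hε : 0 < ε)
    {g : (ι → ℝ) → E} (hg : Integrable g) :
    HasSum (fun i => ∫ x in latticeCube ε i, g x) (∫ x, g x) := by
  simpa [iUnion_latticeCube hε] using hasSum_integral_iUnion (measurableSet_latticeCube ε)
    (pairwise_disjoint_latticeCube hε) (hg.integrableOn (s := ⋃ i, latticeCube ε i))

theorem norm_sub_le_indicator_of_mem_latticeCube [Fintype ι] (hε : 0 < ε) (hε₁ : ε ≤ 1)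
    {g : (ι → ℝ) → E} {η : ℝ} (hη : ∀ x y, dist x y ≤ ε → ‖g x - g y‖ ≤ η)
    {i : ι → ℤ} {x : ι → ℝ} (hx : x ∈ latticeCube ε i) :
    ‖g (fun k => ε * i k) - g x‖
      ≤ (Metric.cthickening 1 (tsupport g)).indicator (fun _ => η) x := by
  have hdist := dist_le_of_mem_latticeCube hε.le hx
  by_cases hxK : x ∈ Metric.cthickening 1 (tsupport g)
  · rw [Set.indicator_of_mem hxK]
    exact hη _ _ hdist
  · have hx₀ : x ∉ tsupport g := fun hx' => hxK (Metric.self_subset_cthickening _ hx')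
    have hi₀ : (fun k => ε * i k) ∉ tsupport g := fun hi => hxK
      (Metric.mem_cthickening_of_dist_le x _ 1 _ hi ((dist_comm _ _).trans_le (hdist.trans hε₁)))
    rw [Set.indicator_of_notMem hxK, image_eq_zero_of_notMem_tsupport hx₀,
      image_eq_zero_of_notMem_tsupport hi₀, sub_zero, norm_zero]

theorem norm_smul_tsum_sub_integral_le [Fintype ι] [NormedSpace ℝ E] [CompleteSpace E]
    {g : (ι → ℝ) → E} (hg : Continuous g) (hs : HasCompactSupport g) (hε : 0 < ε) (hε₁ : ε ≤ 1)
    {η : ℝ} (hη : ∀ x y, dist x y ≤ ε → ‖g x - g y‖ ≤ η) :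
    ‖ε ^ Fintype.card ι • ∑' i : ι → ℤ, g (fun k => ε * i k) - ∫ x, g x‖
      ≤ η * volume.real (Metric.cthickening 1 (tsupport g)) := by
  set K := Metric.cthickening 1 (tsupport g)
  have hK : IsCompact K := hs.cthickening
  have hg_int : Integrable g := hg.integrable_of_hasCompactSupport hs
  have hη_int : Integrable (K.indicator fun _ => η) :=
    (integrableOn_const hK.measure_lt_top.ne).integrable_indicator hK.isClosed.measurableSet
  have hcube : ∀ i : ι → ℤ, volume (latticeCube ε i) ≠ ⊤ := by simp [volume_latticeCube hε.le]
  set err : (ι → ℤ) → E := fun i => ∫ x in latticeCube ε i, (g (fun k => ε * i k) - g x)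
  have herr_le : ∀ i, ‖err i‖ ≤ ∫ x in latticeCube ε i, K.indicator (fun _ => η) x := fun i =>
    (norm_integral_le_integral_norm _).trans <| setIntegral_mono_on
      ((integrableOn_const (hcube i)).sub hg_int.integrableOn).norm hη_int.integrableOn
      (measurableSet_latticeCube ε i) fun x hx =>
        norm_sub_le_indicator_of_mem_latticeCube hε hε₁ hη hx
  have hη_sum := hasSum_setIntegral_latticeCube hε hη_int
  have herr_summable : Summable fun i => ‖err i‖ :=
    .of_nonneg_of_le (fun _ => norm_nonneg _) herr_le hη_sum.summable
  have hterm : ∀ i : ι → ℤ, ε ^ Fintype.card ι • g (fun k => ε * i k)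
      = (∫ x in latticeCube ε i, g x) + err i := fun i => by
    simp only [err]
    rw [integral_sub (integrableOn_const (C := g fun k => ε * i k) (hcube i)) hg_int.integrableOn,
      setIntegral_const, measureReal_def, volume_latticeCube hε.le,
      ENNReal.toReal_ofReal (by positivity)]
    abel
  have hsum : ε ^ Fintype.card ι • ∑' i : ι → ℤ, g (fun k => ε * i k)
      = (∫ x, g x) + ∑' i, err i := by
    rw [← tsum_const_smul'', tsum_congr hterm]
    exact ((hasSum_setIntegral_latticeCube hε hg_int).add herr_summable.of_norm.hasSum).tsum_eq
  rw [hsum, add_sub_cancel_left]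
  calc ‖∑' i, err i‖ ≤ ∑' i, ‖err i‖ := norm_tsum_le_tsum_norm herr_summable
    _ ≤ ∑' i, ∫ x in latticeCube ε i, K.indicator (fun _ => η) x :=
      herr_summable.tsum_le_tsum herr_le hη_sum.summable
    _ = η * volume.real K := by
      rw [hη_sum.tsum_eq, integral_indicator_const _ hK.isClosed.measurableSet, smul_eq_mul,
        mul_comm]

theorem tendsto_smul_tsum_lattice_integral [Fintype ι] [NormedSpace ℝ E] [CompleteSpace E]
    {g : (ι → ℝ) → E} (hg : Continuous g) (hs : HasCompactSupport g) :
    Tendsto (fun ε : ℝ => ε ^ Fintype.card ι • ∑' i : ι → ℤ, g (fun k => ε * i k))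
      (𝓝[>] 0) (𝓝 (∫ x, g x)) := by
  set C := volume.real (Metric.cthickening 1 (tsupport g))
  have hC : 0 ≤ C := measureReal_nonneg
  refine Metric.tendsto_nhds.mpr fun η hη => ?_
  obtain ⟨δ, hδ, hδη⟩ := Metric.uniformContinuous_iff.mp (hs.uniformContinuous_of_continuous hg)
    (η / (C + 1)) (by positivity)
  filter_upwards [Ioo_mem_nhdsGT (lt_min hδ one_pos)] with ε ⟨hε, hεδ⟩
  have hmod : ∀ x y, dist x y ≤ ε → ‖g x - g y‖ ≤ η / (C + 1) := fun x y hxy => by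
    rw [← dist_eq_norm]
    exact (hδη (hxy.trans_lt (hεδ.trans_le (min_le_left _ _)))).le
  calc dist _ _ ≤ η / (C + 1) * C :=
        (dist_eq_norm _ _).trans_le <| norm_smul_tsum_sub_integral_le hg hs hε
          (hεδ.le.trans (min_le_right _ _)) hmod
    _ < η := by
      rw [div_mul_eq_mul_div, div_lt_iff₀ (by positivity)]
      nlinarith

end LatticeCube

theorem ContDiff.isOpenMap_of_det_fderiv_ne_zero {𝕜 E : Type*} [RCLike 𝕜] [NormedAddCommGroup E]
    [NormedSpace 𝕜 E] [FiniteDimensional 𝕜 E] {Ψ : E → E} (hΨ : ContDiff 𝕜 1 Ψ)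
    (hdet : ∀ x, (fderiv 𝕜 Ψ x).det ≠ 0) : IsOpenMap Ψ := by
  have : CompleteSpace E := FiniteDimensional.complete 𝕜 E
  exact isOpenMap_of_hasStrictFDerivAt_equiv
    (f' := fun x => (fderiv 𝕜 Ψ x).toContinuousLinearEquivOfDetNeZero (hdet x)) fun x => by
      simpa using hΨ.contDiffAt.hasStrictFDerivAt one_ne_zero

theorem integral_mul_inv_abs_det_fderiv_invFun {E : Type*} [NormedAddCommGroup E]
    [NormedSpace ℝ E] [FiniteDimensional ℝ E] [MeasurableSpace E] [BorelSpace E]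
    (μ : Measure E) [μ.IsAddHaarMeasure] {Ψ : E → E} (hΨ : Differentiable ℝ Ψ)
    (hbij : Function.Bijective Ψ) (hdet : ∀ x, (fderiv ℝ Ψ x).det ≠ 0) (f : E → ℝ) :
    ∫ x, f x * |(fderiv ℝ Ψ (Function.invFun Ψ x)).det|⁻¹ ∂μ = ∫ y, f (Ψ y) ∂μ := by
  have h := integral_image_eq_integral_abs_det_fderiv_smul μ MeasurableSet.univ
    (fun x _ => (hΨ x).hasFDerivAt.hasFDerivWithinAt) hbij.injective.injOn
    (fun x => f x * |(fderiv ℝ Ψ (Function.invFun Ψ x)).det|⁻¹)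
  rw [Set.image_univ, hbij.surjective.range_eq, setIntegral_univ, setIntegral_univ] at h
  rw [h]
  congr 1 with y
  rw [Function.leftInverse_invFun hbij.injective y, smul_eq_mul, mul_left_comm,
    mul_inv_cancel₀ (abs_ne_zero.mpr (hdet y)), mul_one]

theorem stmt_12_general (d : ℕ)
    (Ψ : EuclideanSpace ℝ (Fin d) → EuclideanSpace ℝ (Fin d))
    (hΨ : ContDiff ℝ 1 Ψ) (hbij : Function.Bijective Ψ)
    (hdet : ∀ x, (fderiv ℝ Ψ x).det ≠ 0)
    (f : EuclideanSpace ℝ (Fin d) → ℝ) (hf : Continuous f) (hsupp : HasCompactSupport f) :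
    Tendsto
      (fun ε : ℝ => ε ^ d *
        ∑' i : Fin d → ℤ, f (Ψ (WithLp.toLp 2 (fun k => ε * (i k : ℝ)))))
      (𝓝[>] (0 : ℝ))
      (𝓝 (∫ x, f x * |(fderiv ℝ Ψ (Function.invFun Ψ x)).det|⁻¹)) := by
  let e := (Equiv.ofBijective Ψ hbij).toHomeomorphOfContinuousOpen hΨ.continuous
    (hΨ.isOpenMap_of_det_fderiv_ne_zero hdet)
  have hsupp' : HasCompactSupport (f ∘ Ψ ∘ WithLp.toLp 2) :=
    (hsupp.comp_homeomorph e).comp_homeomorph (PiLp.homeomorph 2 _).symm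
  rw [integral_mul_inv_abs_det_fderiv_invFun volume (hΨ.differentiable one_ne_zero) hbij hdet,
    ← (PiLp.volume_preserving_toLp (Fin d)).integral_comp
      (MeasurableEquiv.toLp 2 (Fin d → ℝ)).measurableEmbedding]
  simpa using tendsto_smul_tsum_lattice_integral
    (hf.comp (hΨ.continuous.comp (PiLp.continuous_toLp 2 _))) hsupp'

/-- if `Ψ : ℝ^d → ℝ^d` is a `C¹` diffeomorphism (bijective with everywhere
invertible differential), then for every continuous compactly supported `f : ℝ^d → ℝ` the
rescaled lattice sums over `Ψ(εℤ^d)` converge to the weighted integral: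
`ε^d ∑_{i ∈ ℤ^d} f(Ψ(εi)) → ∫ f(x) |det DΨ(Ψ^{−1}(x))|^{−1} dx` as `ε → 0⁺`. -/
theorem stmt_12 (d : ℕ) (hd : 1 ≤ d)
    (Ψ : EuclideanSpace ℝ (Fin d) → EuclideanSpace ℝ (Fin d))
    (hΨ : ContDiff ℝ 1 Ψ) (hbij : Function.Bijective Ψ)
    (hdet : ∀ x, (fderiv ℝ Ψ x).det ≠ 0)
    (f : EuclideanSpace ℝ (Fin d) → ℝ) (hf : Continuous f) (hsupp : HasCompactSupport f) :
    Tendsto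
      (fun ε : ℝ => ε ^ d *
        ∑' i : Fin d → ℤ, f (Ψ (WithLp.toLp 2 (fun k => ε * (i k : ℝ)))))
      (𝓝[>] (0 : ℝ))
      (𝓝 (∫ x, f x * |(fderiv ℝ Ψ (Function.invFun Ψ x)).det|⁻¹)) :=
  stmt_12_general d Ψ hΨ hbij hdet f hf hsupp
end

section
/- Let A ⊆ ℝ^d be nonempty, M > 0, and for every x ∈ A let F_x ⊆ ℝ^m be a set contained in the closed ball of radius M centered at 0. Let s : A → ℝ^m be a Lipschitz function with |s(x)| ≤ M and s(x) ∈ F_x for all x ∈ A. Then there exists C > 0 (depending only on M and the Lipschitz constant of s) such that for every j > 2M there is a C-Lipschitz map ψ_j : A × ℝ^m → ℝ^m satisfying: ψ_j(x, u) = u whenever |u| ≤ j; ψ_j(x, u) = s(x) whenever |u| ≥ 2j; and ψ_j(x, w) ∈ F_x for every w ∈ F_x. In particular, constraint sets F_x contained in a common bounded set always satisfy the truncation condition (Condition 2) with Lipschitz constant independent of j. -/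
/-!
Interpolate between `s x` and `u` with a piecewise-linear cutoff in `‖u‖` which is `1` on the
ball of radius `j`, `0` outside the ball of radius `2j`, and has slope `1/j`. To keep the product
of the cutoff with `u` Lipschitz, `u` is first retracted radially onto the ball of radius `2j`
(which changes nothing where the cutoff is nonzero); the cutoff's slope `1/j` then multiplies a
quantity of size at most `2j + M`, so the Lipschitz constant does not depend on `j`. Since
`F x` lies in the ball of radius `M < j`, the map fixes `F x` pointwise.
-/

open Set
open scoped NNReal

section Truncation

variable {E : Type*} [SeminormedAddCommGroup E]

noncomputable def radialCutoff (j : ℝ) (u : E) : ℝ :=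
  projIcc (0 : ℝ) 1 zero_le_one ((2 * j - ‖u‖) / j)

theorem radialCutoff_mem_Icc (j : ℝ) (u : E) : radialCutoff j u ∈ Icc (0 : ℝ) 1 :=
  Subtype.prop _

theorem radialCutoff_of_norm_le {j : ℝ} {u : E} (hj : 0 < j) (hu : ‖u‖ ≤ j) :
    radialCutoff j u = 1 := by
  rw [radialCutoff, projIcc_of_right_le _ ((one_le_div hj).2 (by linarith))]

theorem radialCutoff_of_le_norm {j : ℝ} {u : E} (hj : 0 < j) (hu : 2 * j ≤ ‖u‖) :
    radialCutoff j u = 0 := by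
  rw [radialCutoff, projIcc_of_le_left _ (div_nonpos_of_nonpos_of_nonneg (by linarith) hj.le)]

theorem lipschitzWith_radialCutoff {j : ℝ} (hj : 0 < j) :
    LipschitzWith (Real.toNNReal j⁻¹) (radialCutoff j : E → ℝ) := by
  refine LipschitzWith.of_dist_le_mul fun u v => ?_
  calc dist (radialCutoff j u) (radialCutoff j v)
      ≤ dist ((2 * j - ‖u‖) / j) ((2 * j - ‖v‖) / j) := by
        simpa [radialCutoff, Subtype.dist_eq] using
          (LipschitzWith.projIcc (zero_le_one' ℝ)).dist_le_mul
            ((2 * j - ‖u‖) / j) ((2 * j - ‖v‖) / j)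
    _ = j⁻¹ * |‖u‖ - ‖v‖| := by
        rw [Real.dist_eq, ← sub_div, div_eq_inv_mul, abs_mul, abs_of_pos (inv_pos.2 hj),
          abs_sub_comm]
        ring_nf
    _ ≤ Real.toNNReal j⁻¹ * dist u v := by
        rw [Real.coe_toNNReal _ (inv_nonneg.2 hj.le), dist_eq_norm]
        gcongr
        exact abs_norm_sub_norm_le u v

variable [NormedSpace ℝ E]

noncomputable def radialRetraction (R : ℝ) (u : E) : E := (R / max R ‖u‖) • u

theorem radialRetraction_of_norm_le {R : ℝ} {u : E} (hR : 0 < R) (hu : ‖u‖ ≤ R) :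
    radialRetraction R u = u := by
  rw [radialRetraction, max_eq_left hu, div_self hR.ne', one_smul]

theorem norm_radialRetraction_le {R : ℝ} (hR : 0 < R) (u : E) :
    ‖radialRetraction R u‖ ≤ R := by
  have ha : 0 < max R ‖u‖ := lt_max_of_lt_left hR
  calc ‖radialRetraction R u‖ = R / max R ‖u‖ * ‖u‖ := by
        rw [radialRetraction, norm_smul, Real.norm_of_nonneg (by positivity)]
    _ ≤ R / max R ‖u‖ * max R ‖u‖ := by gcongr; exact le_max_right _ _
    _ = R := div_mul_cancel₀ _ ha.ne'

theorem lipschitzWith_radialRetraction {R : ℝ} (hR : 0 < R) :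
    LipschitzWith 2 (radialRetraction R : E → E) := by
  refine LipschitzWith.of_dist_le_mul fun u v => ?_
  set a := max R ‖u‖
  set b := max R ‖v‖
  have ha : 0 < a := lt_max_of_lt_left hR
  have hb : 0 < b := lt_max_of_lt_left hR
  have hRa : R / a ≤ 1 := div_le_one_of_le₀ (le_max_left _ _) ha.le
  have hvb : ‖v‖ / b ≤ 1 := div_le_one_of_le₀ (le_max_right _ _) hb.le
  have hba : |b - a| ≤ ‖u - v‖ := by
    have h := abs_max_sub_max_le_abs ‖v‖ ‖u‖ R
    rw [max_comm ‖v‖, max_comm ‖u‖, abs_sub_comm ‖v‖] at h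
    exact h.trans (abs_norm_sub_norm_le u v)
  have hsplit : radialRetraction R u - radialRetraction R v =
      (R / a) • (u - v) + (R / a - R / b) • v := by
    simp only [radialRetraction, a, b]
    module
  have hscale : |R / a - R / b| * ‖v‖ = R / a * |b - a| * (‖v‖ / b) := by
    rw [show R / a - R / b = R / a * (b - a) / b by field_simp, abs_div, abs_mul,
      abs_of_pos (div_pos hR ha), abs_of_pos hb]
    ring
  calc dist (radialRetraction R u) (radialRetraction R v)
      ≤ ‖(R / a) • (u - v)‖ + ‖(R / a - R / b) • v‖ := by
        rw [dist_eq_norm, hsplit]; exact norm_add_le _ _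
    _ = R / a * ‖u - v‖ + R / a * |b - a| * (‖v‖ / b) := by
        rw [norm_smul, norm_smul, Real.norm_of_nonneg (div_pos hR ha).le, Real.norm_eq_abs,
          hscale]
    _ ≤ 1 * ‖u - v‖ + 1 * ‖u - v‖ * 1 := by gcongr
    _ = 2 * dist u v := by rw [dist_eq_norm]; ring

end Truncation

theorem LipschitzOnWith.lineMap {α E : Type*} [PseudoMetricSpace α] [SeminormedAddCommGroup E]
    [NormedSpace ℝ E] {S : Set α} {f g : α → E} {θ : α → ℝ} {Kf Kg Kθ B : ℝ≥0}
    (hf : LipschitzOnWith Kf f S) (hg : LipschitzOnWith Kg g S) (hθ : LipschitzOnWith Kθ θ S)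
    (hθ01 : ∀ x ∈ S, θ x ∈ Icc (0 : ℝ) 1) (hB : ∀ x ∈ S, ‖g x - f x‖ ≤ B) :
    LipschitzOnWith (Kf + Kg + Kθ * B) (fun x => AffineMap.lineMap (f x) (g x) (θ x)) S := by
  refine LipschitzOnWith.of_dist_le_mul fun x hx y hy => ?_
  obtain ⟨hθx0, hθx1⟩ := hθ01 x hx
  have hsplit : AffineMap.lineMap (f x) (g x) (θ x) - AffineMap.lineMap (f y) (g y) (θ y) =
      (1 - θ x) • (f x - f y) + θ x • (g x - g y) + (θ x - θ y) • (g y - f y) := by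
    simp only [AffineMap.lineMap_apply_module]
    module
  calc dist (AffineMap.lineMap (f x) (g x) (θ x)) (AffineMap.lineMap (f y) (g y) (θ y))
      ≤ ‖(1 - θ x) • (f x - f y)‖ + ‖θ x • (g x - g y)‖ +
          ‖(θ x - θ y) • (g y - f y)‖ := by
        rw [dist_eq_norm, hsplit]; exact norm_add₃_le
    _ = |1 - θ x| * dist (f x) (f y) + |θ x| * dist (g x) (g y) +
          dist (θ x) (θ y) * ‖g y - f y‖ := by
        simp only [norm_smul, Real.norm_eq_abs, dist_eq_norm]
    _ ≤ 1 * (Kf * dist x y) + 1 * (Kg * dist x y) + Kθ * dist x y * B := by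
        gcongr
        · rw [abs_of_nonneg (by linarith)]; linarith
        · exact hf.dist_le_mul x hx y hy
        · rw [abs_of_nonneg hθx0]; exact hθx1
        · exact hg.dist_le_mul x hx y hy
        · exact hθ.dist_le_mul x hx y hy
        · exact hB y hy
    _ = ↑(Kf + Kg + Kθ * B) * dist x y := by push_cast; ring

section TruncationMap

variable {α E : Type*} [SeminormedAddCommGroup E] [NormedSpace ℝ E]

noncomputable def truncationMap (s : α → E) (j : ℝ) (p : α × E) : E :=
  AffineMap.lineMap (s p.1) (radialRetraction (2 * j) p.2) (radialCutoff j p.2)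

theorem truncationMap_of_norm_le (s : α → E) {j : ℝ} (hj : 0 < j) {x : α} {u : E}
    (hu : ‖u‖ ≤ j) : truncationMap s j (x, u) = u := by
  rw [truncationMap, radialCutoff_of_norm_le hj hu,
    radialRetraction_of_norm_le (by linarith) (by linarith), AffineMap.lineMap_apply_one]

theorem truncationMap_of_le_norm (s : α → E) {j : ℝ} (hj : 0 < j) {x : α} {u : E}
    (hu : 2 * j ≤ ‖u‖) : truncationMap s j (x, u) = s x := by
  rw [truncationMap, radialCutoff_of_le_norm hj hu, AffineMap.lineMap_apply_zero]

theorem lipschitzOnWith_truncationMap [PseudoMetricSpace α] {s : α → E} {A : Set α}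
    {K : ℝ≥0} {M j : ℝ} (hs : LipschitzOnWith K s A) (hsM : ∀ x ∈ A, ‖s x‖ ≤ M)
    (hj : 0 < j) (hMj : M ≤ j) :
    LipschitzOnWith (K + 5) (truncationMap s j) (A ×ˢ univ) := by
  have hB : ∀ p ∈ A ×ˢ univ,
      ‖radialRetraction (2 * j) p.2 - s p.1‖ ≤ Real.toNNReal (2 * j + M) := by
    rintro ⟨x, u⟩ ⟨hx, -⟩
    exact (norm_sub_le _ _).trans <| (add_le_add (norm_radialRetraction_le (by linarith) u)
      (hsM x hx)).trans (Real.le_coe_toNNReal _)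
  refine (LipschitzOnWith.lineMap (hs.comp LipschitzWith.prod_fst.lipschitzOnWith mapsTo_fst_prod)
    ((lipschitzWith_radialRetraction (by linarith)).comp LipschitzWith.prod_snd).lipschitzOnWith
    ((lipschitzWith_radialCutoff hj).comp LipschitzWith.prod_snd).lipschitzOnWith
    (fun p _ => radialCutoff_mem_Icc j p.2) hB).weaken ?_
  have hslope : j⁻¹ * Real.toNNReal (2 * j + M) ≤ 3 := by
    rw [inv_mul_le_iff₀ hj, Real.coe_toNNReal']
    exact max_le (by linarith) (by linarith)
  rw [← NNReal.coe_le_coe]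
  push_cast
  rw [Real.coe_toNNReal _ (by positivity)]
  linarith

end TruncationMap

theorem stmt_15_general (d m : ℕ)
    (A : Set (EuclideanSpace ℝ (Fin d))) (M : ℝ) (hM : 0 < M)
    (F : EuclideanSpace ℝ (Fin d) → Set (EuclideanSpace ℝ (Fin m)))
    (hF : ∀ x ∈ A, F x ⊆ Metric.closedBall (0 : EuclideanSpace ℝ (Fin m)) M)
    (s : EuclideanSpace ℝ (Fin d) → EuclideanSpace ℝ (Fin m)) (K : NNReal)
    (hs : LipschitzOnWith K s A)
    (hsM : ∀ x ∈ A, ‖s x‖ ≤ M) :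
    ∃ C : ℝ, 0 < C ∧ ∀ j : ℝ, 2 * M < j →
      ∃ ψ : EuclideanSpace ℝ (Fin d) × EuclideanSpace ℝ (Fin m) → EuclideanSpace ℝ (Fin m),
        LipschitzOnWith (Real.toNNReal C) ψ (A ×ˢ (Set.univ : Set (EuclideanSpace ℝ (Fin m)))) ∧
        (∀ x ∈ A, ∀ u : EuclideanSpace ℝ (Fin m), ‖u‖ ≤ j → ψ (x, u) = u) ∧
        (∀ x ∈ A, ∀ u : EuclideanSpace ℝ (Fin m), 2 * j ≤ ‖u‖ → ψ (x, u) = s x) ∧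
        (∀ x ∈ A, ∀ w ∈ F x, ψ (x, w) ∈ F x) := by
  refine ⟨K + 5, by positivity, fun j hMj => ?_⟩
  have hj : 0 < j := by linarith
  refine ⟨truncationMap s j, ?_, fun x _ u hu => truncationMap_of_norm_le s hj hu,
    fun x _ u hu => truncationMap_of_le_norm s hj hu, fun x hx w hw => ?_⟩
  · have hC : Real.toNNReal (K + 5) = K + 5 := by
      rw [← NNReal.coe_inj, Real.coe_toNNReal _ (by positivity)]
      push_cast
      rfl
    rw [hC]
    exact lipschitzOnWith_truncationMap hs hsM hj (by linarith)
  · have hwM : ‖w‖ ≤ M := by simpa using hF x hx hw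
    rwa [truncationMap_of_norm_le s hj (by linarith)]

/-- if all the constraint sets `F_x ⊆ ℝ^m`, `x ∈ A`, are contained in the
closed ball of radius `M` and `s` is a Lipschitz selection of `F` bounded by `M`, then the
truncation condition (Condition 2) holds with a Lipschitz constant `C` independent of `j`:
for every `j > 2M` there is a `C`-Lipschitz map `ψ_j : A × ℝ^m → ℝ^m` with `ψ_j(x,u) = u`
for `|u| ≤ j`, `ψ_j(x,u) = s(x)` for `|u| ≥ 2j`, and `ψ_j(x, ·)(F_x) ⊆ F_x`. -/
theorem stmt_15 (d m : ℕ) (hd : 1 ≤ d) (hm : 1 ≤ m)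
    (A : Set (EuclideanSpace ℝ (Fin d))) (hA : A.Nonempty) (M : ℝ) (hM : 0 < M)
    (F : EuclideanSpace ℝ (Fin d) → Set (EuclideanSpace ℝ (Fin m)))
    (hF : ∀ x ∈ A, F x ⊆ Metric.closedBall (0 : EuclideanSpace ℝ (Fin m)) M)
    (s : EuclideanSpace ℝ (Fin d) → EuclideanSpace ℝ (Fin m)) (K : NNReal)
    (hs : LipschitzOnWith K s A)
    (hsM : ∀ x ∈ A, ‖s x‖ ≤ M) (hsF : ∀ x ∈ A, s x ∈ F x) :
    ∃ C : ℝ, 0 < C ∧ ∀ j : ℝ, 2 * M < j →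
      ∃ ψ : EuclideanSpace ℝ (Fin d) × EuclideanSpace ℝ (Fin m) → EuclideanSpace ℝ (Fin m),
        LipschitzOnWith (Real.toNNReal C) ψ (A ×ˢ (Set.univ : Set (EuclideanSpace ℝ (Fin m)))) ∧
        (∀ x ∈ A, ∀ u : EuclideanSpace ℝ (Fin m), ‖u‖ ≤ j → ψ (x, u) = u) ∧
        (∀ x ∈ A, ∀ u : EuclideanSpace ℝ (Fin m), 2 * j ≤ ‖u‖ → ψ (x, u) = s x) ∧
        (∀ x ∈ A, ∀ w ∈ F x, ψ (x, w) ∈ F x) :=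
  stmt_15_general d m A M hM F hF s K hs hsM
end
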